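/- arXiv:1401.4178 — 2 statements merged into one kernel-verified Lean document; each statement's English description precedes it below -/
import Mathlib

section
/- Suppose 0 < 1/m ≪ ε ≪ 1 and m, k ∈ ℕ with k ≥ 3. Let Q = {V₁,…,V_k} be a (k,m)-equipartition of a vertex set V and C = V₁…V_k a directed cycle. Suppose M is a set of directed matchings partitioned into M₁,…,M_k with |M_i| ≤ m/k, where each M ∈ M_i is an ordered directed matching with e(M) ≤ εm and V(M) ⊆ V_i, and suppose H is a graph on V such that H[V_{i−1}, V_{i+1}] is a 2εm-regular bipartite graph for all i ≤ k. Then there exist an orientation H_dir of H and a balanced extension BE of M with respect to (Q, C) and parameters (2ε, 3), such that each path sequence in BE is obtained from some M ∈ M by adding edges of H_dir. -/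
/-!
For every edge of a matching `M` of class `i` we add one edge of `H` from `V_{i-1}` to `V_{i+1}`
that avoids the vertices of the path sequence built so far. Each path sequence is then a directed
matching, hence trivially a union of paths and an extension of `M`, and it is locally balanced
because the `|M|` edges inside `V_i` are compensated by the `|M|` new edges from `V_{i-1}` to
`V_{i+1}`. The new edges are chosen greedily among the `md` edges of `H` from `V_{i-1}` to
`V_{i+1}`: a choice must avoid the at most `2d` edges at the endpoints of edges already chosen for
the same matching, and both orientations of every edge already chosen for another matching, which
only matters for the at most `2(m/k) · εm` edges of matchings of class `i` or `i + 2`. This rules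
out at most `εm · 2d + 2 · 2(m/k) · εm < md` candidates. The chosen edges are distinct even up to
orientation, so they extend to an orientation of `H`.
-/

open Finset

/-- Outdegree of a vertex in a digraph given as a finite set of ordered pairs. -/
def outdegD {V : Type*} [DecidableEq V] (G : Finset (V × V)) (v : V) : ℕ :=
  (G.filter fun e => e.1 = v).card

/-- Indegree of a vertex. -/
def indegD {V : Type*} [DecidableEq V] (G : Finset (V × V)) (v : V) : ℕ :=
  (G.filter fun e => e.2 = v).card

/-- The set of vertices covered by the edges of a digraph. -/
def suppD {V : Type*} [DecidableEq V] (G : Finset (V × V)) : Finset V :=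
  G.image Prod.fst ∪ G.image Prod.snd

/-- A path sequence: a union of vertex-disjoint directed paths. -/
def IsPathSeq {V : Type*} [DecidableEq V] (P : Finset (V × V)) : Prop :=
  (∀ v, outdegD P v ≤ 1 ∧ indegD P v ≤ 1) ∧
  ∀ (n : ℕ) (f : Fin (n + 1) → V),
    ¬((∀ i : Fin n, (f i.castSucc, f i.succ) ∈ P) ∧ (f (Fin.last n), f 0) ∈ P)

/-- A (directed) matching given as a list of edges (an *ordered* directed matching). -/
def IsMatchingL {V : Type*} (L : List (V × V)) : Prop :=
  (∀ e ∈ L, e.1 ≠ e.2) ∧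
  L.Pairwise fun e e' => e.1 ≠ e'.1 ∧ e.1 ≠ e'.2 ∧ e.2 ≠ e'.1 ∧ e.2 ≠ e'.2

/-- `P` is a `W`-extension of the directed matching `M`: each edge of `M` lies on a distinct
directed path of `P` whose final vertex is in `W`. -/
def IsExt {V : Type*} [DecidableEq V] (P M : Finset (V × V)) (W : Finset V) : Prop :=
  M ⊆ P ∧
  (∀ e ∈ M, ∀ w, Relation.ReflTransGen (fun a b => (a, b) ∈ P) e.2 w →
    outdegD P w = 0 → w ∈ W) ∧
  (∀ e ∈ M, ∀ e' ∈ M, e ≠ e' →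
    ¬ Relation.ReflTransGen (fun a b => (a, b) ∈ P) e.2 e'.1 ∧
    ¬ Relation.ReflTransGen (fun a b => (a, b) ∈ P) e.2 e'.2)

open Function

lemma sub_one_ne_add_one_of_two_ne_zero {R : Type*} [CommRing R] (h2 : (2 : R) ≠ 0) (i : R) :
    i - 1 ≠ i + 1 :=
  fun h => h2 (by linear_combination -h)

lemma sub_one_ne_self_of_two_ne_zero {R : Type*} [CommRing R] (h2 : (2 : R) ≠ 0) (i : R) :
    i - 1 ≠ i :=
  fun h => h2 (by linear_combination -2 * h)

lemma add_one_ne_self_of_two_ne_zero {R : Type*} [CommRing R] (h2 : (2 : R) ≠ 0) (i : R) :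
    i + 1 ≠ i :=
  fun h => h2 (by linear_combination 2 * h)

lemma ZMod.two_ne_zero_of_three_le {k : ℕ} (hk : 3 ≤ k) : (2 : ZMod k) ≠ 0 := fun h => by
  have := Nat.le_of_dvd two_pos ((ZMod.natCast_eq_zero_iff 2 k).1 (by exact_mod_cast h))
  omega

section Digraph

variable {V : Type*} [DecidableEq V]

def IsDiMatching (P : Finset (V × V)) : Prop :=
  ∀ x ∈ P, ∀ y ∈ P, x.2 ≠ y.1 ∧ (x ≠ y → x.1 ≠ y.1 ∧ x.2 ≠ y.2)

lemma fst_mem_suppD {P : Finset (V × V)} {e : V × V} (he : e ∈ P) : e.1 ∈ suppD P :=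
  mem_union_left _ (mem_image_of_mem _ he)

lemma snd_mem_suppD {P : Finset (V × V)} {e : V × V} (he : e ∈ P) : e.2 ∈ suppD P :=
  mem_union_right _ (mem_image_of_mem _ he)

lemma suppD_union (P Q : Finset (V × V)) : suppD (P ∪ Q) = suppD P ∪ suppD Q := by
  simp only [suppD, image_union, union_union_union_comm]

lemma suppD_subset_union {P : Finset (V × V)} {A B : Finset V} (h : P ⊆ A ×ˢ B) :
    suppD P ⊆ A ∪ B :=
  union_subset_union (image_subset_iff.2 fun _ he => (mem_product.1 (h he)).1)
    (image_subset_iff.2 fun _ he => (mem_product.1 (h he)).2)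

lemma card_suppD_le (P : Finset (V × V)) : #(suppD P) ≤ 2 * #P := by
  have h1 := card_image_le (s := P) (f := Prod.fst)
  have h2 := card_image_le (s := P) (f := Prod.snd)
  exact (card_union_le _ _).trans (by omega)

lemma IsMatchingL.isDiMatching_toFinset {L : List (V × V)} (hL : IsMatchingL L) :
    IsDiMatching L.toFinset := by
  intro x hx y hy
  rw [List.mem_toFinset] at hx hy
  have : Std.Symm fun e e' : V × V => e.1 ≠ e'.1 ∧ e.1 ≠ e'.2 ∧ e.2 ≠ e'.1 ∧ e.2 ≠ e'.2 :=
    ⟨fun _ _ ⟨h1, h2, h3, h4⟩ => ⟨h1.symm, h3.symm, h2.symm, h4.symm⟩⟩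
  by_cases hxy : x = y
  · subst hxy
    exact ⟨(hL.1 x hx).symm, fun h => absurd rfl h⟩
  · have h := hL.2.forall hx hy hxy
    exact ⟨h.2.2.1, fun _ => ⟨h.1, h.2.2.2⟩⟩

lemma IsDiMatching.union {P Q : Finset (V × V)} (hP : IsDiMatching P) (hQ : IsDiMatching Q)
    (hPQ : Disjoint (suppD P) (suppD Q)) : IsDiMatching (P ∪ Q) := by
  have hne : ∀ u ∈ suppD P, ∀ w ∈ suppD Q, u ≠ w :=
    fun u hu w hw huw => disjoint_left.1 hPQ hu (huw ▸ hw)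
  intro x hx y hy
  rcases mem_union.1 hx with hx | hx <;> rcases mem_union.1 hy with hy | hy
  · exact hP x hx y hy
  · exact ⟨hne _ (snd_mem_suppD hx) _ (fst_mem_suppD hy), fun _ =>
      ⟨hne _ (fst_mem_suppD hx) _ (fst_mem_suppD hy),
        hne _ (snd_mem_suppD hx) _ (snd_mem_suppD hy)⟩⟩
  · exact ⟨(hne _ (fst_mem_suppD hy) _ (snd_mem_suppD hx)).symm, fun _ =>
      ⟨(hne _ (fst_mem_suppD hy) _ (fst_mem_suppD hx)).symm,
        (hne _ (snd_mem_suppD hy) _ (snd_mem_suppD hx)).symm⟩⟩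
  · exact hQ x hx y hy

lemma IsDiMatching.isPathSeq {P : Finset (V × V)} (hP : IsDiMatching P) : IsPathSeq P := by
  refine ⟨fun v => ⟨card_le_one.2 fun x hx y hy => ?_, card_le_one.2 fun x hx y hy => ?_⟩, ?_⟩
  · rw [mem_filter] at hx hy
    by_contra hxy
    exact ((hP x hx.1 y hy.1).2 hxy).1 (hx.2.trans hy.2.symm)
  · rw [mem_filter] at hx hy
    by_contra hxy
    exact ((hP x hx.1 y hy.1).2 hxy).2 (hx.2.trans hy.2.symm)
  -- the closing edge of a cycle ends at `f 0`, where the first edge starts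
  · rintro (_ | n) f ⟨hf, hlast⟩
    · exact (hP _ hlast _ hlast).1 rfl
    · exact (hP _ hlast _ (hf 0)).1 rfl

lemma IsDiMatching.isExt {P M : Finset (V × V)} {W : Finset V} (hP : IsDiMatching P)
    (hMP : M ⊆ P) (hW : ∀ e ∈ M, e.2 ∈ W) : IsExt P M W := by
  have hstop : ∀ e ∈ M, ∀ w, Relation.ReflTransGen (fun a b => (a, b) ∈ P) e.2 w → w = e.2 := by
    intro e he w hw
    rcases hw.cases_head with rfl | ⟨c, hc, -⟩
    · rfl
    · exact absurd rfl (hP e (hMP he) _ hc).1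
  refine ⟨hMP, fun e he w hw _ => hstop e he w hw ▸ hW e he, fun e he e' he' hne => ⟨?_, ?_⟩⟩
  · exact fun h => (hP e (hMP he) e' (hMP he')).1 (hstop e he _ h).symm
  · exact fun h => ((hP e (hMP he) e' (hMP he')).2 hne).2 (hstop e he _ h).symm

lemma exists_orientation_superset {H C : Finset (V × V)} (hsymm : ∀ e ∈ H, e.swap ∈ H)
    (hloop : ∀ e ∈ H, e.1 ≠ e.2) (hCH : C ⊆ H) (hC : ∀ e ∈ C, e.swap ∉ C) :
    ∃ D ⊆ H, (∀ e ∈ H, (e ∈ D ↔ e.swap ∉ D)) ∧ C ⊆ D := by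
  classical
  let : LinearOrder V := IsWellOrder.linearOrder WellOrderingRel
  refine ⟨H.filter fun e => e ∈ C ∨ (e.swap ∉ C ∧ e.1 < e.2), filter_subset _ _, fun e he => ?_,
    fun e he => mem_filter.2 ⟨hCH he, Or.inl he⟩⟩
  have h1 := hC e
  have h2 := hC e.swap
  rw [Prod.swap_swap] at h2
  simp only [mem_filter, Prod.swap_swap, Prod.fst_swap, Prod.snd_swap, hsymm e he, he, true_and]
  rcases lt_trichotomy e.1 e.2 with h | h | h
  · have := h.not_gt
    tauto
  · exact absurd h (hloop e he)
  · have := h.not_gt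
    tauto

end Digraph

section Greedy

variable {τ β : Type*} [DecidableEq τ]

def IsConflictFreeChoice (T : Finset τ) (cand : τ → Finset β) (R : τ → β → τ → β → Prop)
    (f : τ → β) : Prop :=
  (∀ t ∈ T, f t ∈ cand t) ∧ ∀ t ∈ T, ∀ t' ∈ T, t ≠ t' → ¬ R t (f t) t' (f t')

open Classical in
lemma exists_mem_forall_not_conflict {T S : Finset τ} {cand : τ → Finset β}
    {R : τ → β → τ → β → Prop} {w : τ → τ → ℕ}
    (hw : ∀ t ∈ T, ∀ t' ∈ T, t ≠ t' → ∀ x' ∈ cand t', #{x ∈ cand t | R t x t' x'} ≤ w t t')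
    {a : τ} (haT : a ∈ T) (hsum : ∑ t ∈ T.erase a, w a t < #(cand a)) (hST : S ⊆ T) (ha : a ∉ S)
    {f : τ → β} (hf : ∀ t ∈ S, f t ∈ cand t) : ∃ x ∈ cand a, ∀ t ∈ S, ¬ R a x t (f t) := by
  have hne : ∀ t ∈ S, t ≠ a := fun t ht => ne_of_mem_of_not_mem ht ha
  have hblocked : #{x ∈ cand a | ∃ t ∈ S, R a x t (f t)} < #(cand a) := calc
    _ ≤ #(S.biUnion fun t => {x ∈ cand a | R a x t (f t)}) := card_le_card fun x hx => by
        obtain ⟨hx, t, ht, hR⟩ := mem_filter.1 hx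
        exact mem_biUnion.2 ⟨t, ht, mem_filter.2 ⟨hx, hR⟩⟩
    _ ≤ ∑ t ∈ S, #{x ∈ cand a | R a x t (f t)} := card_biUnion_le
    _ ≤ ∑ t ∈ S, w a t := sum_le_sum fun t ht => hw a haT t (hST ht) (hne t ht).symm _ (hf t ht)
    _ ≤ ∑ t ∈ T.erase a, w a t := sum_le_sum_of_subset fun t ht => mem_erase.2 ⟨hne t ht, hST ht⟩
    _ < #(cand a) := hsum
  obtain ⟨x, hx, hx_free⟩ := exists_mem_notMem_of_card_lt_card hblocked
  simp only [mem_filter, hx, true_and, not_exists, not_and] at hx_free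
  exact ⟨x, hx, hx_free⟩

open Classical in
theorem exists_isConflictFreeChoice [Nonempty β] (T : Finset τ) (cand : τ → Finset β)
    (R : τ → β → τ → β → Prop) (hR : ∀ t x t' x', R t x t' x' → R t' x' t x) (w : τ → τ → ℕ)
    (hw : ∀ t ∈ T, ∀ t' ∈ T, t ≠ t' → ∀ x' ∈ cand t', #{x ∈ cand t | R t x t' x'} ≤ w t t')
    (hsum : ∀ t ∈ T, ∑ t' ∈ T.erase t, w t t' < #(cand t)) :
    ∃ f, IsConflictFreeChoice T cand R f := by
  suffices ∀ S ⊆ T, ∃ f, IsConflictFreeChoice S cand R f from this T Subset.rfl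
  intro S
  induction S using Finset.induction_on with
  | empty => exact fun _ => ⟨fun _ => Classical.arbitrary β, by simp [IsConflictFreeChoice]⟩
  | insert a S ha ih =>
    intro hST
    obtain ⟨f, hf_mem, hf_free⟩ := ih ((subset_insert a S).trans hST)
    have haT := hST (mem_insert_self a S)
    obtain ⟨x, hx, hx_free⟩ := exists_mem_forall_not_conflict hw haT (hsum a haT)
      ((subset_insert a S).trans hST) ha hf_mem
    have hupd : ∀ t ∈ S, update f a x t = f t :=
      fun t ht => update_of_ne (ne_of_mem_of_not_mem ht ha) _ _
    refine ⟨update f a x, fun t ht => ?_, fun t ht t' ht' htt' => ?_⟩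
    · rcases mem_insert.1 ht with rfl | ht
      · rwa [update_self]
      · rw [hupd t ht]
        exact hf_mem t ht
    · rcases mem_insert.1 ht with rfl | htS <;> rcases mem_insert.1 ht' with rfl | ht'S
      · exact absurd rfl htt'
      · rw [update_self, hupd t' ht'S]
        exact hx_free t' ht'S
      · rw [update_self, hupd t htS]
        exact fun h => hx_free t htS (hR _ _ _ _ h)
      · rw [hupd t htS, hupd t' ht'S]
        exact hf_free t htS t' ht'S htt'

end Greedy

section Clusters

variable {V : Type*} {k : ℕ} {Vc : ZMod k → Finset V}

lemma eq_of_mem_cluster (hVc : Pairwise (Disjoint on Vc)) {v : V} {i j : ZMod k}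
    (hi : v ∈ Vc i) (hj : v ∈ Vc j) : i = j :=
  hVc.eq (not_disjoint_iff.2 ⟨v, hi, hj⟩)

lemma disjoint_of_subset_cluster_product (hVc : Pairwise (Disjoint on Vc))
    (h2 : (2 : ZMod k) ≠ 0) {A B : Finset (V × V)} {i : ZMod k} (hA : A ⊆ Vc i ×ˢ Vc i)
    (hB : B ⊆ Vc (i - 1) ×ˢ Vc (i + 1)) : Disjoint A B :=
  (disjoint_product.2 (Or.inl (hVc (sub_one_ne_self_of_two_ne_zero h2 i).symm))).mono hA hB

variable [DecidableEq V]

lemma card_filter_fst_mem_cluster (hVc : Pairwise (Disjoint on Vc)) {P : Finset (V × V)}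
    {a : ZMod k} {B : Finset V} (hP : P ⊆ Vc a ×ˢ B) (j : ZMod k) :
    #{e ∈ P | e.1 ∈ Vc j} = if j = a then #P else 0 := by
  split_ifs with hj
  · rw [hj, filter_true_of_mem fun e he => (mem_product.1 (hP he)).1]
  · rw [filter_false_of_mem fun e he h => hj (eq_of_mem_cluster hVc h (mem_product.1 (hP he)).1),
      card_empty]

lemma card_filter_snd_mem_cluster (hVc : Pairwise (Disjoint on Vc)) {P : Finset (V × V)}
    {A : Finset V} {b : ZMod k} (hP : P ⊆ A ×ˢ Vc b) (j : ZMod k) :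
    #{e ∈ P | e.2 ∈ Vc j} = if j = b then #P else 0 := by
  split_ifs with hj
  · rw [hj, filter_true_of_mem fun e he => (mem_product.1 (hP he)).2]
  · rw [filter_false_of_mem fun e he h => hj (eq_of_mem_cluster hVc h (mem_product.1 (hP he)).2),
      card_empty]

variable (Vc) in
def IsLocallyBalanced (P : Finset (V × V)) : Prop :=
  ∀ i, #{e ∈ P | e.1 ∈ Vc i} = #{e ∈ P | e.2 ∈ Vc (i + 1)}

lemma disjoint_suppD_of_subset_cluster_product (hVc : Pairwise (Disjoint on Vc))
    (h2 : (2 : ZMod k) ≠ 0) {A B : Finset (V × V)} {i : ZMod k} (hA : A ⊆ Vc i ×ˢ Vc i)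
    (hB : B ⊆ Vc (i - 1) ×ˢ Vc (i + 1)) : Disjoint (suppD A) (suppD B) := by
  refine (disjoint_union_right.2 ⟨hVc ?_, hVc ?_⟩).mono
    ((suppD_subset_union hA).trans (union_self _).subset) (suppD_subset_union hB)
  · exact (sub_one_ne_self_of_two_ne_zero h2 i).symm
  · exact fun h => (sub_one_ne_add_one_of_two_ne_zero h2 i) (by linear_combination 2 * h)

lemma isLocallyBalanced_union (hVc : Pairwise (Disjoint on Vc)) (h2 : (2 : ZMod k) ≠ 0)
    {A B : Finset (V × V)} {i : ZMod k} (hA : A ⊆ Vc i ×ˢ Vc i)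
    (hB : B ⊆ Vc (i - 1) ×ˢ Vc (i + 1)) (hAB : #B = #A) : IsLocallyBalanced Vc (A ∪ B) := by
  have hdisj := disjoint_of_subset_cluster_product hVc h2 hA hB
  intro j
  rw [filter_union, filter_union, card_union_of_disjoint (disjoint_filter_filter hdisj),
    card_union_of_disjoint (disjoint_filter_filter hdisj), card_filter_fst_mem_cluster hVc hA,
    card_filter_fst_mem_cluster hVc hB, card_filter_snd_mem_cluster hVc hA,
    card_filter_snd_mem_cluster hVc hB, hAB]
  simp only [add_left_inj]
  simp only [← eq_sub_iff_add_eq]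
  exact add_comm _ _

lemma card_suppD_union_inter_le (hVc : Pairwise (Disjoint on Vc)) (h2 : (2 : ZMod k) ≠ 0)
    {A B : Finset (V × V)} {i : ZMod k} (hA : A ⊆ Vc i ×ˢ Vc i)
    (hB : B ⊆ Vc (i - 1) ×ˢ Vc (i + 1)) (hAB : #B = #A) (j : ZMod k) :
    #(suppD (A ∪ B) ∩ Vc j) ≤ 2 * #A := by
  rw [suppD_union, union_inter_distrib_right]
  by_cases hj : j = i
  · subst hj
    have hB' : Disjoint (suppD B) (Vc j) :=
      (disjoint_union_left.2 ⟨hVc (sub_one_ne_self_of_two_ne_zero h2 j),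
        hVc (add_one_ne_self_of_two_ne_zero h2 j)⟩).mono_left (suppD_subset_union hB)
    rw [disjoint_iff_inter_eq_empty.1 hB', union_empty]
    exact (card_le_card inter_subset_left).trans (card_suppD_le A)
  · have hA' : Disjoint (suppD A) (Vc j) :=
      (hVc (Ne.symm hj)).mono_left ((suppD_subset_union hA).trans (union_self _).subset)
    rw [disjoint_iff_inter_eq_empty.1 hA', empty_union, ← hAB]
    exact (card_le_card inter_subset_left).trans (card_suppD_le B)

lemma suppD_union_subset {A B : Finset (V × V)} {i : ZMod k} (hA : A ⊆ Vc i ×ˢ Vc i)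
    (hB : B ⊆ Vc (i - 1) ×ˢ Vc (i + 1)) : suppD (A ∪ B) ⊆ Vc (i - 1) ∪ Vc i ∪ Vc (i + 1) := by
  rw [suppD_union]
  refine union_subset ((suppD_subset_union hA).trans ?_) ((suppD_subset_union hB).trans ?_) <;>
  · intro v
    simp only [mem_union]
    tauto

lemma card_filter_inter_cluster_nonempty_le {ι : Type*} [Fintype ι]
    (hVc : Pairwise (Disjoint on Vc)) {cl : ι → ZMod k} {P : ι → Finset V}
    (hP : ∀ s, P s ⊆ Vc (cl s - 1) ∪ Vc (cl s) ∪ Vc (cl s + 1)) {c : ℝ}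
    (hcl : ∀ i, (#{s | cl s = i} : ℝ) ≤ c) (j : ZMod k) :
    (#{s | (P s ∩ Vc j).Nonempty} : ℝ) ≤ 3 * c := by
  classical
  have hsub : #{s | (P s ∩ Vc j).Nonempty} ≤
      #{s | cl s = j + 1} + #{s | cl s = j} + #{s | cl s = j - 1} := by
    calc _ ≤ #(({s | cl s = j + 1} : Finset ι) ∪ ({s | cl s = j} : Finset ι) ∪
            ({s | cl s = j - 1} : Finset ι)) :=
          card_le_card fun s hs => ?_
      _ ≤ _ := (card_union_le _ _).trans (Nat.add_le_add_right (card_union_le _ _) _)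
    obtain ⟨v, hv⟩ := (mem_filter.1 hs).2
    obtain ⟨hvP, hvj⟩ := mem_inter.1 hv
    replace hv := hP s hvP
    simp only [mem_union, mem_filter, mem_univ, true_and] at hv ⊢
    rcases hv with (hv | hv) | hv
    · exact Or.inl (Or.inl (by linear_combination eq_of_mem_cluster hVc hv hvj))
    · exact Or.inl (Or.inr (eq_of_mem_cluster hVc hv hvj))
    · exact Or.inr (by linear_combination eq_of_mem_cluster hVc hv hvj)
  calc (#{s | (P s ∩ Vc j).Nonempty} : ℝ)
      ≤ #{s | cl s = j + 1} + #{s | cl s = j} + #{s | cl s = j - 1} := by exact_mod_cast hsub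
    _ ≤ 3 * c := by linarith [hcl (j + 1), hcl j, hcl (j - 1)]

end Clusters

section SkipEdges

variable {V : Type*} [DecidableEq V] {k : ℕ} (H : Finset (V × V)) (Vc : ZMod k → Finset V)

def skipEdges (i : ZMod k) : Finset (V × V) :=
  {e ∈ H | e.1 ∈ Vc (i - 1) ∧ e.2 ∈ Vc (i + 1)}

def IsSkipRegular (d : ℕ) : Prop :=
  ∀ i : ZMod k,
    (∀ v ∈ Vc (i - 1), #{e ∈ H | e.1 = v ∧ e.2 ∈ Vc (i + 1)} = d) ∧
    (∀ v ∈ Vc (i + 1), #{e ∈ H | e.1 = v ∧ e.2 ∈ Vc (i - 1)} = d)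

variable {H Vc}

lemma skipEdges_subset_product (i : ZMod k) :
    skipEdges H Vc i ⊆ Vc (i - 1) ×ˢ Vc (i + 1) :=
  fun _ he => mem_product.2 (mem_filter.1 he).2

lemma card_filter_fst_skipEdges {d : ℕ} (hreg : IsSkipRegular H Vc d) {i : ZMod k} {v : V}
    (hv : v ∈ Vc (i - 1)) : #{e ∈ skipEdges H Vc i | e.1 = v} = d := by
  rw [← (hreg i).1 v hv, skipEdges, filter_filter]
  congr 1
  ext e
  simp only [mem_filter]
  constructor
  · rintro ⟨h, ⟨-, h2⟩, h1⟩
    exact ⟨h, h1, h2⟩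
  · rintro ⟨h, rfl, h2⟩
    exact ⟨h, ⟨hv, h2⟩, rfl⟩

lemma card_filter_snd_skipEdges {d : ℕ} (hsymm : ∀ e ∈ H, e.swap ∈ H)
    (hreg : IsSkipRegular H Vc d) {i : ZMod k} {v : V} (hv : v ∈ Vc (i + 1)) :
    #{e ∈ skipEdges H Vc i | e.2 = v} = d := by
  rw [← (hreg i).2 v hv, ← card_image_of_injective _ Prod.swap_injective]
  congr 1
  ext e
  simp only [skipEdges, mem_filter, mem_image]
  constructor
  · rintro ⟨a, ⟨⟨h, h1, -⟩, rfl⟩, rfl⟩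
    exact ⟨hsymm a h, rfl, h1⟩
  · rintro ⟨h, rfl, h1⟩
    exact ⟨e.swap, ⟨⟨hsymm e h, h1, hv⟩, rfl⟩, rfl⟩

lemma card_skipEdges {d : ℕ} (hreg : IsSkipRegular H Vc d) (i : ZMod k) :
    #(skipEdges H Vc i) = #(Vc (i - 1)) * d := by
  rw [card_eq_sum_card_fiberwise fun e he => (mem_product.1 (skipEdges_subset_product i he)).1,
    sum_congr rfl fun v hv => card_filter_fst_skipEdges hreg hv, sum_const, smul_eq_mul]

end SkipEdges

section Conflict

variable {ι V : Type*} {k : ℕ}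

-- Distinct up to orientation, so that all chosen edges fit into one orientation of `H`, and
-- vertex-disjoint within one matching, so that each path sequence stays a directed matching.
def Conflict (s : ι) (x : V × V) (s' : ι) (x' : V × V) : Prop :=
  x = x' ∨ x = x'.swap ∨ (s = s' ∧ (x.1 = x'.1 ∨ x.2 = x'.2))

lemma Conflict.symm {s s' : ι} {x x' : V × V} (h : Conflict s x s' x') : Conflict s' x' s x := by
  rcases h with rfl | rfl | ⟨rfl, h | h⟩
  · exact Or.inl rfl
  · exact Or.inr (Or.inl rfl)
  · exact Or.inr (Or.inr ⟨rfl, Or.inl h.symm⟩)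
  · exact Or.inr (Or.inr ⟨rfl, Or.inr h.symm⟩)

variable [DecidableEq ι] [DecidableEq V]

-- An edge chosen for the same matching blocks the `≤ 2d` candidates at its endpoints; one chosen
-- for another matching blocks at most its two orientations, and only if its class is `cl s` or
-- `cl s + 2`.
def conflictWeight (cl : ι → ZMod k) (d : ℕ) (s s' : ι) : ℕ :=
  if s = s' then 2 * d else if cl s' = cl s ∨ cl s' = cl s + 2 then 2 else 0

open Classical in
lemma card_filter_conflict_le {H : Finset (V × V)} {Vc : ZMod k → Finset V}
    (hVc : Pairwise (Disjoint on Vc)) (h2 : (2 : ZMod k) ≠ 0) (hsymm : ∀ e ∈ H, e.swap ∈ H)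
    {d : ℕ} (hreg : IsSkipRegular H Vc d) (cl : ι → ZMod k) {s s' : ι} {x' : V × V}
    (hx' : x' ∈ skipEdges H Vc (cl s')) :
    #{x ∈ skipEdges H Vc (cl s) | Conflict s x s' x'} ≤ conflictWeight cl d s s' := by
  obtain ⟨hx'1, hx'2⟩ := mem_product.1 (skipEdges_subset_product _ hx')
  have hmem : ∀ {x}, x ∈ skipEdges H Vc (cl s) → x.1 ∈ Vc (cl s - 1) ∧ x.2 ∈ Vc (cl s + 1) :=
    fun hx => mem_product.1 (skipEdges_subset_product _ hx)
  unfold conflictWeight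
  split_ifs with hs hcl
  · subst hs
    calc _ ≤ #({x ∈ skipEdges H Vc (cl s) | x.1 = x'.1} ∪
              {x ∈ skipEdges H Vc (cl s) | x.2 = x'.2}) :=
          card_le_card fun x hx => ?_
      _ ≤ d + d := (card_union_le _ _).trans (add_le_add
          (card_filter_fst_skipEdges hreg hx'1).le (card_filter_snd_skipEdges hsymm hreg hx'2).le)
      _ = 2 * d := (two_mul d).symm
    obtain ⟨hxS, rfl | rfl | ⟨-, h | h⟩⟩ := mem_filter.1 hx
    · exact mem_union_left _ (mem_filter.2 ⟨hxS, rfl⟩)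
    · exact absurd (eq_of_mem_cluster hVc (hmem hxS).1 hx'2)
        (sub_one_ne_add_one_of_two_ne_zero h2 _)
    · exact mem_union_left _ (mem_filter.2 ⟨hxS, h⟩)
    · exact mem_union_right _ (mem_filter.2 ⟨hxS, h⟩)
  · calc _ ≤ #({x', x'.swap} : Finset (V × V)) := card_le_card fun x hx => ?_
      _ ≤ 2 := card_le_two
    obtain ⟨-, rfl | rfl | ⟨h, -⟩⟩ := mem_filter.1 hx
    · exact mem_insert_self _ _
    · exact mem_insert_of_mem (mem_singleton_self _)
    · exact absurd h hs
  · refine (card_eq_zero.2 (filter_eq_empty_iff.2 fun x hx h => ?_)).le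
    rcases h with rfl | rfl | ⟨h, -⟩
    · have := eq_of_mem_cluster hVc hx'1 (hmem hx).1
      exact hcl (Or.inl (by linear_combination this))
    · have := eq_of_mem_cluster hVc hx'1 (hmem hx).2
      exact hcl (Or.inr (by linear_combination this))
    · exact hs h

end Conflict

section Tasks

variable {ι V : Type*} [Fintype ι] [DecidableEq V] {k : ℕ}

def tasks (M : ι → List (V × V)) : Finset (Σ _ : ι, V × V) :=
  univ.sigma fun s => (M s).toFinset

lemma mem_tasks {M : ι → List (V × V)} {s : ι} {e : V × V} : ⟨s, e⟩ ∈ tasks M ↔ e ∈ M s := by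
  simp [tasks]

variable [DecidableEq ι]

lemma sum_tasks_conflictWeight_lt {M : ι → List (V × V)} {cl : ι → ZMod k} {ε : ℝ} {m d : ℕ}
    (hε : 0 < ε) (hε₁ : ε ≤ 1 / 100) (hm : 1 ≤ m) (hk : 3 ≤ k)
    (hlen : ∀ s, ((M s).length : ℝ) ≤ ε * m) (hcl : ∀ i, (#{s | cl s = i} : ℝ) ≤ m / k)
    (hd : (d : ℝ) = 2 * ε * m) (s : ι) :
    ∑ t ∈ tasks M, conflictWeight cl d s t.1 < m * d := by
  have hw : ∀ s', (conflictWeight cl d s s' : ℝ) ≤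
      (if s = s' then 2 * (d : ℝ) else 0) + (if cl s' = cl s ∨ cl s' = cl s + 2 then 2 else 0) := by
    intro s'
    unfold conflictWeight
    split_ifs <;> norm_num
  have hpair : (#{s' | cl s' = cl s ∨ cl s' = cl s + 2} : ℝ) ≤ 2 * (m / k) := by
    rw [filter_or]
    calc _ ≤ (#{s' | cl s' = cl s} : ℝ) + #{s' | cl s' = cl s + 2} := by
          exact_mod_cast card_union_le _ _
      _ ≤ 2 * (m / k) := by linarith [hcl (cl s), hcl (cl s + 2)]
  have hsum_w : ∑ s', (conflictWeight cl d s s' : ℝ) ≤ 2 * d + 2 * (2 * (m / k)) := calc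
    _ ≤ ∑ s', ((if s = s' then 2 * (d : ℝ) else 0) +
          (if cl s' = cl s ∨ cl s' = cl s + 2 then 2 else 0)) := sum_le_sum fun s' _ => hw s'
    _ = 2 * d + 2 * #{s' | cl s' = cl s ∨ cl s' = cl s + 2} := by
          rw [sum_add_distrib, sum_ite_eq, if_pos (mem_univ _), ← sum_filter, sum_const,
            nsmul_eq_mul]
          ring
    _ ≤ 2 * d + 2 * (2 * (m / k)) := by linarith
  have hm0 : (0 : ℝ) < m := by exact_mod_cast hm
  have hmk : (m : ℝ) / k ≤ m / 3 := div_le_div_of_nonneg_left hm0.le (by norm_num)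
    (by exact_mod_cast hk)
  have hsigma : ∑ t ∈ tasks M, (conflictWeight cl d s t.1 : ℝ) =
      ∑ s', #(M s').toFinset * (conflictWeight cl d s s' : ℝ) := by
    rw [tasks, sum_sigma]
    simp only [sum_const, nsmul_eq_mul]
  have hbound : ∑ s', #(M s').toFinset * (conflictWeight cl d s s' : ℝ) ≤
      ε * m * ∑ s', (conflictWeight cl d s s' : ℝ) := by
    rw [mul_sum]
    exact sum_le_sum fun s' _ => mul_le_mul_of_nonneg_right
      ((Nat.cast_le.2 (M s').toFinset_card_le).trans (hlen s')) (Nat.cast_nonneg _)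
  have key : ∑ t ∈ tasks M, (conflictWeight cl d s t.1 : ℝ) < m * d := by
    rw [hsigma]
    refine hbound.trans_lt ?_
    -- εm · (2d + 4m/k) ≤ εm² · (4ε + 4/3) < 2εm² = md
    rw [hd] at hsum_w ⊢
    nlinarith [mul_pos hε (mul_pos hm0 hm0), mul_le_mul_of_nonneg_left hsum_w (mul_pos hε hm0).le]
  exact_mod_cast key

end Tasks

section BalancingChoice

variable {ι V : Type*} [DecidableEq V] {k : ℕ}
  {H : Finset (V × V)} {Vc : ZMod k → Finset V} {M : ι → List (V × V)} {cl : ι → ZMod k}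
  {f : (Σ _ : ι, V × V) → V × V}

variable (M f) in
def extEdges (s : ι) : Finset (V × V) :=
  (M s).toFinset.image fun e => f ⟨s, e⟩

variable (M f) in
def pathSeq (s : ι) : Finset (V × V) :=
  (M s).toFinset ∪ extEdges M f s

lemma sdiff_pathSeq_subset (s : ι) : pathSeq M f s \ (M s).toFinset ⊆ extEdges M f s := by
  rw [pathSeq, union_sdiff_left]
  exact sdiff_subset

lemma toFinset_subset_product {s : ι} (hMin : ∀ e ∈ M s, e.1 ∈ Vc (cl s) ∧ e.2 ∈ Vc (cl s)) :
    (M s).toFinset ⊆ Vc (cl s) ×ˢ Vc (cl s) :=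
  fun e he => mem_product.2 (hMin e (List.mem_toFinset.1 he))

variable [Fintype ι]

variable (H Vc M cl f) in
def IsBalancingChoice : Prop :=
  IsConflictFreeChoice (tasks M) (fun t => skipEdges H Vc (cl t.1))
    (fun t x t' x' => Conflict t.1 x t'.1 x') f

theorem exists_isBalancingChoice [DecidableEq ι] [Nonempty V] (hVc : Pairwise (Disjoint on Vc))
    (h2 : (2 : ZMod k) ≠ 0) (hsymm : ∀ e ∈ H, e.swap ∈ H) {d m : ℕ}
    (hreg : IsSkipRegular H Vc d) (hcard : ∀ i, #(Vc i) = m)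
    (hsum : ∀ s, ∑ t ∈ tasks M, conflictWeight cl d s t.1 < m * d) :
    ∃ f, IsBalancingChoice H Vc M cl f :=
  exists_isConflictFreeChoice _ _ _ (fun _ _ _ _ => Conflict.symm)
    (fun t t' => conflictWeight cl d t.1 t'.1)
    (fun _ _ _ _ _ _ hx' => card_filter_conflict_le hVc h2 hsymm hreg cl hx')
    (fun t _ => by
      rw [card_skipEdges hreg, hcard]
      exact (sum_le_sum_of_subset (erase_subset _ _)).trans_lt (hsum t.1))

lemma extEdges_subset_image (s : ι) : extEdges M f s ⊆ (tasks M).image f :=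
  image_subset_iff.2 fun _ he => mem_image_of_mem f (mem_tasks.2 (List.mem_toFinset.1 he))

namespace IsBalancingChoice

lemma extEdges_subset (hf : IsBalancingChoice H Vc M cl f) (s : ι) :
    extEdges M f s ⊆ skipEdges H Vc (cl s) :=
  image_subset_iff.2 fun _ he => hf.1 _ (mem_tasks.2 (List.mem_toFinset.1 he))

lemma extEdges_subset_product (hf : IsBalancingChoice H Vc M cl f) (s : ι) :
    extEdges M f s ⊆ Vc (cl s - 1) ×ˢ Vc (cl s + 1) :=
  (hf.extEdges_subset s).trans (skipEdges_subset_product _)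

lemma image_subset (hf : IsBalancingChoice H Vc M cl f) : (tasks M).image f ⊆ H :=
  image_subset_iff.2 fun t ht => (mem_filter.1 (hf.1 t ht)).1

lemma card_extEdges (hf : IsBalancingChoice H Vc M cl f) (s : ι) :
    #(extEdges M f s) = #(M s).toFinset :=
  card_image_of_injOn fun e he e' he' h => by_contra fun hne =>
    hf.2 _ (mem_tasks.2 (List.mem_toFinset.1 he)) _ (mem_tasks.2 (List.mem_toFinset.1 he'))
      (by simpa using hne) (Or.inl h)

lemma isDiMatching_extEdges (hf : IsBalancingChoice H Vc M cl f)
    (hVc : Pairwise (Disjoint on Vc)) (h2 : (2 : ZMod k) ≠ 0) (s : ι) :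
    IsDiMatching (extEdges M f s) := by
  intro x hx y hy
  have hxy := mem_product.1 (hf.extEdges_subset_product s hx)
  have hyy := mem_product.1 (hf.extEdges_subset_product s hy)
  refine ⟨fun h => sub_one_ne_add_one_of_two_ne_zero h2 (cl s)
    (eq_of_mem_cluster hVc hyy.1 (h ▸ hxy.2)), fun hne => ?_⟩
  obtain ⟨e, he, rfl⟩ := mem_image.1 hx
  obtain ⟨e', he', rfl⟩ := mem_image.1 hy
  have hc := hf.2 _ (mem_tasks.2 (List.mem_toFinset.1 he)) _ (mem_tasks.2 (List.mem_toFinset.1 he'))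
    (fun h => hne (by rw [h]))
  exact ⟨fun h => hc (Or.inr (Or.inr ⟨rfl, Or.inl h⟩)),
    fun h => hc (Or.inr (Or.inr ⟨rfl, Or.inr h⟩))⟩

lemma disjoint_extEdges (hf : IsBalancingChoice H Vc M cl f) {s s' : ι} (hs : s ≠ s') :
    Disjoint (extEdges M f s) (extEdges M f s') := by
  refine disjoint_left.2 fun x hx hx' => ?_
  obtain ⟨e, he, rfl⟩ := mem_image.1 hx
  obtain ⟨e', he', h⟩ := mem_image.1 hx'
  exact hf.2 _ (mem_tasks.2 (List.mem_toFinset.1 he)) _ (mem_tasks.2 (List.mem_toFinset.1 he'))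
    (fun h => hs (congrArg Sigma.fst h)) (Or.inl h.symm)

lemma swap_notMem_image (hf : IsBalancingChoice H Vc M cl f) (hVc : Pairwise (Disjoint on Vc))
    (h2 : (2 : ZMod k) ≠ 0) : ∀ x ∈ (tasks M).image f, x.swap ∉ (tasks M).image f := by
  intro x hx hx'
  obtain ⟨t, ht, rfl⟩ := mem_image.1 hx
  obtain ⟨t', ht', h⟩ := mem_image.1 hx'
  by_cases htt : t = t'
  · subst htt
    have hxy := mem_product.1 (skipEdges_subset_product _ (hf.1 t ht))
    exact sub_one_ne_add_one_of_two_ne_zero h2 _ (eq_of_mem_cluster hVc hxy.1 (h ▸ hxy.2))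
  · exact hf.2 t ht t' ht' htt (Or.inr (Or.inl (Prod.swap_eq_iff_eq_swap.1 h.symm)))

lemma isDiMatching_pathSeq (hf : IsBalancingChoice H Vc M cl f)
    (hVc : Pairwise (Disjoint on Vc)) (h2 : (2 : ZMod k) ≠ 0) {s : ι} (hmatch : IsMatchingL (M s))
    (hMin : ∀ e ∈ M s, e.1 ∈ Vc (cl s) ∧ e.2 ∈ Vc (cl s)) : IsDiMatching (pathSeq M f s) :=
  hmatch.isDiMatching_toFinset.union (hf.isDiMatching_extEdges hVc h2 s)
    (disjoint_suppD_of_subset_cluster_product hVc h2 (toFinset_subset_product hMin)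
      (hf.extEdges_subset_product s))

lemma isLocallyBalanced_pathSeq (hf : IsBalancingChoice H Vc M cl f)
    (hVc : Pairwise (Disjoint on Vc)) (h2 : (2 : ZMod k) ≠ 0) {s : ι}
    (hMin : ∀ e ∈ M s, e.1 ∈ Vc (cl s) ∧ e.2 ∈ Vc (cl s)) : IsLocallyBalanced Vc (pathSeq M f s) :=
  isLocallyBalanced_union hVc h2 (toFinset_subset_product hMin) (hf.extEdges_subset_product s)
    (hf.card_extEdges s)

lemma card_suppD_pathSeq_inter_le (hf : IsBalancingChoice H Vc M cl f)
    (hVc : Pairwise (Disjoint on Vc)) (h2 : (2 : ZMod k) ≠ 0) {s : ι}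
    (hMin : ∀ e ∈ M s, e.1 ∈ Vc (cl s) ∧ e.2 ∈ Vc (cl s)) {c : ℝ} (hlen : ((M s).length : ℝ) ≤ c)
    (j : ZMod k) : (#(suppD (pathSeq M f s) ∩ Vc j) : ℝ) ≤ 2 * c := by
  have hcard := card_suppD_union_inter_le hVc h2 (toFinset_subset_product hMin)
    (hf.extEdges_subset_product s) (hf.card_extEdges s) j
  have hlen' : (#(M s).toFinset : ℝ) ≤ c := (Nat.cast_le.2 (M s).toFinset_card_le).trans hlen
  calc (#(suppD (pathSeq M f s) ∩ Vc j) : ℝ) ≤ 2 * #(M s).toFinset := by exact_mod_cast hcard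
    _ ≤ 2 * c := by linarith

lemma suppD_pathSeq_subset (hf : IsBalancingChoice H Vc M cl f) {s : ι}
    (hMin : ∀ e ∈ M s, e.1 ∈ Vc (cl s) ∧ e.2 ∈ Vc (cl s)) :
    suppD (pathSeq M f s) ⊆ Vc (cl s - 1) ∪ Vc (cl s) ∪ Vc (cl s + 1) :=
  suppD_union_subset (toFinset_subset_product hMin) (hf.extEdges_subset_product s)

end IsBalancingChoice

end BalancingChoice

/-- Lemma 5.4: constructing a balanced extension of a set of ordered directed matchings,
using the edges of a suitable orientation of an auxiliary graph `H`. -/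
theorem stmt10 :
    ∃ ε₁ : ℝ, 0 < ε₁ ∧ ∀ ε : ℝ, 0 < ε → ε ≤ ε₁ →
    ∃ m₀ : ℕ, ∀ m : ℕ, m₀ ≤ m →
    ∀ k : ℕ, 3 ≤ k →
    ∀ (V : Type) [inst : DecidableEq V], ∀ (Vc : ZMod k → Finset V),
      (∀ i j, i ≠ j → Disjoint (Vc i) (Vc j)) → (∀ i, (Vc i).card = m) →
    ∀ (q : ℕ) (M : Fin q → List (V × V)) (cl : Fin q → ZMod k),
      -- (i): the partition of the set of ordered directed matchings
      (∀ s, IsMatchingL (M s)) →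
      (∀ s, ((M s).length : ℝ) ≤ ε * m) →
      (∀ s, ∀ e ∈ M s, e.1 ∈ Vc (cl s) ∧ e.2 ∈ Vc (cl s)) →
      (∀ i, (((Finset.univ : Finset (Fin q)).filter fun s => cl s = i).card : ℝ)
        ≤ (m : ℝ) / k) →
    ∀ (H : Finset (V × V)) (d : ℕ),
      -- H is an (undirected) graph on V, given symmetrically
      (∀ e ∈ H, (e.2, e.1) ∈ H) → (∀ e ∈ H, e.1 ≠ e.2) →
      (d : ℝ) = 2 * ε * m →
      -- (ii): H[V_{i-1}, V_{i+1}] is 2εm-regular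
      (∀ i : ZMod k,
        (∀ v ∈ Vc (i - 1), (H.filter fun e => e.1 = v ∧ e.2 ∈ Vc (i + 1)).card = d) ∧
        (∀ v ∈ Vc (i + 1), (H.filter fun e => e.1 = v ∧ e.2 ∈ Vc (i - 1)).card = d)) →
      -- conclusion: an orientation of H and a balanced extension with parameters (2ε, 3)
      ∃ Hdir : Finset (V × V),
        Hdir ⊆ H ∧ (∀ e ∈ H, ((e.1, e.2) ∈ Hdir ↔ (e.2, e.1) ∉ Hdir)) ∧
        ∃ (PS : Fin q → Finset (V × V)) (idx : Fin q → ZMod k),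
          -- each path sequence extends its matching by edges of Hdir
          (∀ s, (M s).toFinset ⊆ PS s ∧ PS s \ (M s).toFinset ⊆ Hdir) ∧
          -- (BE1)
          (∀ s, IsPathSeq (PS s)) ∧
          (∀ s i, ((PS s).filter fun e => e.1 ∈ Vc i).card
            = ((PS s).filter fun e => e.2 ∈ Vc (i + 1)).card) ∧
          (∀ s t, s ≠ t →
            Disjoint (PS s \ (M s).toFinset) (PS t \ (M t).toFinset)) ∧
          -- (BE2)
          (∀ s, IsExt (PS s) (M s).toFinset (Vc (idx s))) ∧
          (∀ i, (((Finset.univ : Finset (Fin q)).filter fun s => idx s = i).card : ℝ)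
            ≤ 3 * m / k) ∧
          -- (BE3)
          (∀ s i, ((suppD (PS s) ∩ Vc i).card : ℝ) ≤ 2 * ε * m) ∧
          (∀ i, (((Finset.univ : Finset (Fin q)).filter
              fun s => (suppD (PS s) ∩ Vc i).Nonempty).card : ℝ) ≤ 3 * m / k) := by
  refine ⟨1 / 100, by norm_num, fun ε hε hε₁ => ⟨1, fun m hm k hk V _ Vc hdisj hcard q M cl hmatch
    hlen hMin hcl H d hsymm hloop hd hreg => ?_⟩⟩
  have hVc : Pairwise (Disjoint on Vc) := fun i j => hdisj i j
  have h2 := ZMod.two_ne_zero_of_three_le hk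
  obtain ⟨v, -⟩ : (Vc 0).Nonempty := card_pos.1 (by rw [hcard]; omega)
  have : Nonempty V := ⟨v⟩
  obtain ⟨f, hf⟩ := exists_isBalancingChoice hVc h2 hsymm hreg hcard
    (sum_tasks_conflictWeight_lt hε hε₁ hm hk hlen hcl hd)
  obtain ⟨Hdir, hHdir, horient, hfHdir⟩ :=
    exists_orientation_superset hsymm hloop hf.image_subset (hf.swap_notMem_image hVc h2)
  have hPS s := hf.isDiMatching_pathSeq hVc h2 (hmatch s) (hMin s)
  refine ⟨Hdir, hHdir, horient, pathSeq M f, cl,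
    fun s => ⟨subset_union_left,
      (sdiff_pathSeq_subset s).trans ((extEdges_subset_image s).trans hfHdir)⟩,
    fun s => (hPS s).isPathSeq,
    fun s => hf.isLocallyBalanced_pathSeq hVc h2 (hMin s),
    fun s t hst =>
      (hf.disjoint_extEdges hst).mono (sdiff_pathSeq_subset s) (sdiff_pathSeq_subset t),
    fun s => (hPS s).isExt subset_union_left fun e he => (hMin s e (List.mem_toFinset.1 he)).2,
    fun i => (hcl i).trans (div_le_div_of_nonneg_right
      (le_mul_of_one_le_left (Nat.cast_nonneg m) (by norm_num)) (Nat.cast_nonneg k)),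
    fun s j => (hf.card_suppD_pathSeq_inter_le hVc h2 (hMin s) (hlen s) j).trans_eq (by ring),
    fun j => (card_filter_inter_cluster_nonempty_le hVc (fun s => hf.suppD_pathSeq_subset (hMin s))
      hcl j).trans_eq (mul_div_assoc _ _ _).symm⟩
end

section
/- Let P be a (K, m, ε)-partition of vertex set V, let G be a graph on V, and let J ⊆ G be a balanced exceptional system with respect to P, with fictive edge matching J*. If D is a Hamilton cycle of G[A ∪ B] + J* consistent with J*, then D − J* + J is a Hamilton cycle of G. -/
open SimpleGraph

/-- The degree of a vertex, as the cardinality of its neighbourhood. -/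
noncomputable def degS {V : Type*} (J : SimpleGraph V) (v : V) : ℕ := (J.neighborSet v).ncard

/-- A path system: a graph which is a union of vertex-disjoint paths. -/
def PathSystem {V : Type*} (J : SimpleGraph V) : Prop := J.IsAcyclic ∧ ∀ v, degS J v ≤ 2

/-- The matching `J*_{AB}` induced by the nontrivial paths of a path system `J`. -/
def starAB {V : Type*} (J : SimpleGraph V) : SimpleGraph V where
  Adj x y := x ≠ y ∧ degS J x = 1 ∧ degS J y = 1 ∧ J.Reachable x y
  symm := ⟨fun _ _ h => ⟨h.1.symm, h.2.2.1, h.2.1, h.2.2.2.symm⟩⟩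
  loopless := ⟨fun _ h => h.1 rfl⟩

/-- The cycle graph traced out by `f : ZMod N → V`. -/
def cycOn {V : Type*} {N : ℕ} (f : ZMod N → V) : SimpleGraph V :=
  SimpleGraph.fromEdgeSet {e | ∃ i : ZMod N, e = s(f i, f (i + 1))}

/-- The cycle given by `f` visits the vertices `w 0, w 1, …, w (r-1)` in this (cyclic) order. -/
def VisitsInOrder {V : Type*} {N : ℕ} (f : ZMod N → V) (r : ℕ) (w : ℕ → V) : Prop :=
  ∃ (i₀ : ZMod N) (o : ℕ → ℕ), StrictMonoOn o (Set.Iio r) ∧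
    ∀ j < r, o j < N ∧ f (i₀ + (o j : ZMod N)) = w j

/-- `H` is a Hamilton cycle on the vertex set `A`. -/
def IsHamCycleOn {V : Type*} (H : SimpleGraph V) (A : Set V) : Prop :=
  ∃ (N : ℕ) (f : ZMod N → V), 3 ≤ N ∧ Function.Injective f ∧ Set.range f = A ∧ H = cycOn f

/-!
Write `H = (D - J*) + J`. Off `A ∪ B` only `J` meets a vertex, with degree 2. On `A ∪ B`, `J` has
degree at most 1, its leaves are exactly the endpoints of the fictive edges, and the `J`-edges
inside `A ∪ B` are edges of `J*_{AB}` inside `A` or inside `B`, which consistency keeps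
non-adjacent on `D`; so `J` is edge-disjoint from `D ⊇ J*` and replaces the `J*`-edge at each
endpoint, making `H` 2-regular.

Consistency also makes each arc of `D` from `y i` to `x (i+1)` avoid `J*`. Together with the paths
of `J` joining `x (2k)` to `x (2k+1)`, `y (2k)` to `y (2k+1)` and `x i` to `y i` (`i ≥ 2s`), these
arcs join the ends of every fictive edge in `H`, so `H` is connected. A finite connected 2-regular
graph is a Hamilton cycle.
-/

namespace SimpleGraph.Walk

variable {V : Type*} {G : SimpleGraph V} {u : V}

lemma getVert_zmod_val_add_one {p : G.Walk u u} [NeZero p.length] (i : ZMod p.length) :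
    p.getVert (i + 1).val = p.getVert (i.val + 1) := by
  rw [ZMod.val_add, ZMod.val_one_eq_one_mod, Nat.add_mod_mod]
  rcases Nat.lt_or_ge (i.val + 1) p.length with h | h
  · rw [Nat.mod_eq_of_lt h]
  · rw [show i.val + 1 = p.length by have := i.val_lt; omega, Nat.mod_self, getVert_zero,
      getVert_length]

lemma cycOn_getVert (p : G.Walk u u) [NeZero p.length] :
    cycOn (fun i : ZMod p.length => p.getVert i.val) = p.toSubgraph.spanningCoe := by
  ext a b
  rw [Subgraph.spanningCoe_adj, cycOn, fromEdgeSet_adj]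
  constructor
  · rintro ⟨⟨i, hi⟩, -⟩
    rw [toSubgraph_adj_iff]
    exact ⟨i.val, by rw [hi, getVert_zmod_val_add_one], i.val_lt⟩
  · intro hab
    obtain ⟨n, hn, hlt⟩ := (toSubgraph_adj_iff p).1 hab
    refine ⟨⟨n, ?_⟩, hab.ne⟩
    rw [getVert_zmod_val_add_one, ZMod.val_cast_of_lt hlt, hn]

lemma IsCycle.injective_getVert {p : G.Walk u u} (hp : p.IsCycle) [NeZero p.length] :
    Function.Injective (fun i : ZMod p.length => p.getVert i.val) := fun i j hij =>
  ZMod.val_injective _ <| hp.getVert_injOn' (Nat.le_sub_one_of_lt i.val_lt)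
    (Nat.le_sub_one_of_lt j.val_lt) hij

lemma range_getVert_zmod_val (p : G.Walk u u) [NeZero p.length] :
    Set.range (fun i : ZMod p.length => p.getVert i.val) = {v | v ∈ p.support} := by
  ext v
  simp only [Set.mem_range, Set.mem_ofPred_eq, mem_support_iff_exists_getVert]
  constructor
  · rintro ⟨i, rfl⟩
    exact ⟨i.val, rfl, i.val_lt.le⟩
  · rintro ⟨n, rfl, hn⟩
    rcases hn.eq_or_lt with rfl | hlt
    · exact ⟨0, by simp⟩
    · exact ⟨n, by rw [ZMod.val_cast_of_lt hlt]⟩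

lemma IsCycle.isHamCycleOn {p : G.Walk u u} (hp : p.IsCycle) :
    IsHamCycleOn p.toSubgraph.spanningCoe {v | v ∈ p.support} := by
  have : NeZero p.length := ⟨by have := hp.three_le_length; omega⟩
  exact ⟨p.length, _, hp.three_le_length, hp.injective_getVert, p.range_getVert_zmod_val,
    (p.cycOn_getVert).symm⟩

end SimpleGraph.Walk

lemma isHamCycleOn_univ_of_degS_eq_two {V : Type*} [Finite V] {H : SimpleGraph V}
    (hconn : H.Connected) (hdeg : ∀ v, degS H v = 2) : IsHamCycleOn H Set.univ := by
  classical
  have := Fintype.ofFinite V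
  obtain ⟨v⟩ := hconn.nonempty
  have hcyc : H.IsCycles := fun w _ => hdeg w
  obtain ⟨p, hp, hverts⟩ := hcyc.exists_cycle_toSubgraph_verts_eq_connectedComponentSupp
    (c := H.connectedComponentMk v) rfl
    (Set.nonempty_of_ncard_ne_zero (by rw [← degS, hdeg v]; omega))
  have huniv : p.toSubgraph.verts = Set.univ := by
    rw [hverts, Set.eq_univ_iff_forall]
    intro w
    rw [ConnectedComponent.mem_supp_iff, ConnectedComponent.eq]
    exact hconn.preconnected w v
  have hH : p.toSubgraph.spanningCoe = H := by
    ext a b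
    exact hp.adj_toSubgraph_iff_of_isCycles hcyc (huniv ▸ Set.mem_univ a) b
  rw [← hH, ← huniv, Walk.verts_toSubgraph]
  exact hp.isHamCycleOn

section Degree

variable {V : Type*} [Finite V] {J : SimpleGraph V}

lemma degS_pos_of_adj {v w : V} (h : J.Adj v w) : 0 < degS J v :=
  (Set.ncard_pos (Set.toFinite _)).2 ⟨w, h⟩

lemma degS_sdiff_sup_add_degS {D F : SimpleGraph V} (hFD : F ≤ D) (hJD : Disjoint J D) (v : V) :
    degS ((D \ F) ⊔ J) v + degS F v = degS D v + degS J v := by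
  have hnbr : ((D \ F) ⊔ J).neighborSet v =
      (D.neighborSet v \ F.neighborSet v) ∪ J.neighborSet v := rfl
  have hdisj : Disjoint (D.neighborSet v \ F.neighborSet v) (J.neighborSet v) :=
    Set.disjoint_right.2 fun u hJ hD =>
      (disjoint_edgeSet.2 hJD).ne_of_mem (J.mem_edgeSet.2 hJ) (D.mem_edgeSet.2 hD.1) rfl
  rw [degS, hnbr, Set.ncard_union_eq hdisj, degS, degS, degS, add_right_comm,
    Set.ncard_sdiff_add_ncard_of_subset (s := F.neighborSet v)
      (t := D.neighborSet v) fun _ h => hFD h]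

lemma SimpleGraph.IsAcyclic.exists_degS_eq_one_reachable (hJ : J.IsAcyclic) {v w : V}
    (hvw : J.Adj v w) : ∃ z, z ≠ v ∧ degS J z = 1 ∧ J.Reachable v z := by
  have := Fintype.ofFinite V
  by_contra! hnone
  -- without a leaf other than `v`, every path from `v` could be extended forever
  have hgrow : ∀ n, ∃ z, ∃ p : J.Walk v z, p.IsPath ∧ p.length = n + 1 := by
    intro n
    induction n with
    | zero => exact ⟨w, hvw.toWalk, Walk.IsPath.of_adj hvw, rfl⟩
    | succ n ih =>
      obtain ⟨z, p, hp, hlen⟩ := ih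
      have hnil : ¬ p.Nil := by rw [← Walk.length_eq_zero_iff]; omega
      have hzv : z ≠ v := fun h => hnil (hp.nil_iff_eq.2 h.symm)
      have hpen : J.Adj z p.penultimate := (p.adj_penultimate hnil).symm
      have hdeg : 1 < degS J z := by
        have := degS_pos_of_adj hpen
        have := hnone z hzv
        have : degS J z ≠ 1 := fun h => this h ⟨p⟩
        omega
      obtain ⟨u, hu : J.Adj z u, hune⟩ := Set.exists_ne_of_one_lt_ncard hdeg p.penultimate
      have hus : u ∉ p.support := fun h => hune (hJ.eq_penultimate_of_adj_end hp hu h)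
      exact ⟨u, p.concat hu, hp.concat hus hu, by simp [hlen]⟩
  obtain ⟨z, p, hp, hlen⟩ := hgrow (Fintype.card V)
  have := hp.length_lt
  omega

end Degree

section Enumeration

variable {V : Type*} {J : SimpleGraph V} {s s' : ℕ} {x y : ℕ → V}

lemma starAB_adj {u v : V} :
    (starAB J).Adj u v ↔ u ≠ v ∧ degS J u = 1 ∧ degS J v = 1 ∧ J.Reachable u v := Iff.rfl

def EnumeratesStarAB (J : SimpleGraph V) (s s' : ℕ) (x y : ℕ → V) : Prop :=
  (starAB J).edgeSet =
    {e | ∃ i < s, e = s(x (2 * i), x (2 * i + 1))} ∪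
    {e | ∃ i < s, e = s(y (2 * i), y (2 * i + 1))} ∪
    {e | ∃ i, 2 * s ≤ i ∧ i < s' ∧ e = s(x i, y i)}

lemma EnumeratesStarAB.starAB_adj_x (hE : EnumeratesStarAB J s s' x y) {k : ℕ} (hk : k < s) :
    (starAB J).Adj (x (2 * k)) (x (2 * k + 1)) :=
  show s(_, _) ∈ (starAB J).edgeSet from hE ▸ Or.inl (Or.inl ⟨k, hk, rfl⟩)

lemma EnumeratesStarAB.starAB_adj_y (hE : EnumeratesStarAB J s s' x y) {k : ℕ} (hk : k < s) :
    (starAB J).Adj (y (2 * k)) (y (2 * k + 1)) :=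
  show s(_, _) ∈ (starAB J).edgeSet from hE ▸ Or.inl (Or.inr ⟨k, hk, rfl⟩)

lemma EnumeratesStarAB.starAB_adj_xy (hE : EnumeratesStarAB J s s' x y) {i : ℕ}
    (hi₁ : 2 * s ≤ i) (hi₂ : i < s') : (starAB J).Adj (x i) (y i) :=
  show s(_, _) ∈ (starAB J).edgeSet from hE ▸ Or.inr ⟨i, hi₁, hi₂, rfl⟩

lemma EnumeratesStarAB.degS_eq_one (hE : EnumeratesStarAB J s s' x y) {i : ℕ} (hi : i < s') :
    degS J (x i) = 1 ∧ degS J (y i) = 1 := by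
  rcases lt_or_ge i (2 * s) with h | h
  · obtain ⟨k, rfl | rfl⟩ := Nat.even_or_odd' i
    · exact ⟨(hE.starAB_adj_x (by omega)).2.1, (hE.starAB_adj_y (by omega)).2.1⟩
    · exact ⟨(hE.starAB_adj_x (by omega)).2.2.1, (hE.starAB_adj_y (by omega)).2.2.1⟩
  · exact ⟨(hE.starAB_adj_xy h hi).2.1, (hE.starAB_adj_xy h hi).2.2.1⟩

lemma EnumeratesStarAB.exists_of_starAB_adj (hE : EnumeratesStarAB J s s' x y) (hs : 2 * s ≤ s')
    {u v : V} (h : (starAB J).Adj u v) : ∃ i < s', u = x i ∨ u = y i := by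
  have he : s(u, v) ∈ (starAB J).edgeSet := h
  rw [hE] at he
  rcases he with (⟨k, hk, he⟩ | ⟨k, hk, he⟩) | ⟨i, -, hi, he⟩ <;>
    rcases Sym2.eq_iff.1 he with ⟨rfl, -⟩ | ⟨rfl, -⟩
  exacts [⟨_, by omega, .inl rfl⟩, ⟨_, by omega, .inl rfl⟩, ⟨_, by omega, .inr rfl⟩,
    ⟨_, by omega, .inr rfl⟩, ⟨i, hi, .inl rfl⟩, ⟨i, hi, .inr rfl⟩]

lemma EnumeratesStarAB.degS_eq_one_iff [Finite V] (hE : EnumeratesStarAB J s s' x y)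
    (hJ : J.IsAcyclic) (hs : 2 * s ≤ s') {v : V} :
    degS J v = 1 ↔ ∃ i < s', v = x i ∨ v = y i := by
  constructor
  · intro hv
    obtain ⟨w, hw⟩ := Set.nonempty_of_ncard_ne_zero (s := J.neighborSet v)
      (by rw [← degS, hv]; omega)
    obtain ⟨z, hzv, hz, hvz⟩ := hJ.exists_degS_eq_one_reachable hw
    exact hE.exists_of_starAB_adj hs (starAB_adj.2 ⟨hzv.symm, hv, hz, hvz⟩)
  · rintro ⟨i, hi, rfl | rfl⟩
    exacts [(hE.degS_eq_one hi).1, (hE.degS_eq_one hi).2]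

def interleave (x y : ℕ → V) (j : ℕ) : V := if j % 2 = 0 then x (j / 2) else y (j / 2)

@[simp] lemma interleave_two_mul (i : ℕ) : interleave x y (2 * i) = x i := by
  simp [interleave]

@[simp] lemma interleave_two_mul_add_one (i : ℕ) : interleave x y (2 * i + 1) = y i := by
  simp [interleave, Nat.add_mod, Nat.add_div]

/-- The graph `J*` of fictive edges `x i y i`, `i < s'`. -/
def pairGraph (s' : ℕ) (x y : ℕ → V) : SimpleGraph V :=
  fromEdgeSet {e | ∃ i < s', e = s(x i, y i)}

lemma pairGraph_adj {u v : V} :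
    (pairGraph s' x y).Adj u v ↔ (∃ i < s', s(u, v) = s(x i, y i)) ∧ u ≠ v :=
  fromEdgeSet_adj _

lemma pairGraph_comm : pairGraph s' x y = pairGraph s' y x := by
  ext u v
  simp only [pairGraph_adj, Sym2.eq_swap (a := x _)]

lemma neighborSet_pairGraph (hx : Set.InjOn x (Set.Iio s'))
    (hxy : ∀ i < s', ∀ j < s', x i ≠ y j) {i : ℕ} (hi : i < s') :
    (pairGraph s' x y).neighborSet (x i) = {y i} := by
  ext v
  refine ⟨fun ⟨⟨j, hj, he⟩, _⟩ => ?_, ?_⟩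
  · rcases Sym2.eq_iff.1 he with ⟨h1, rfl⟩ | ⟨h1, -⟩
    · rw [hx hi hj h1]; rfl
    · exact absurd h1 (hxy i hi j hj)
  · rintro rfl
    exact pairGraph_adj.2 ⟨⟨i, hi, rfl⟩, hxy i hi i hi⟩

lemma neighborSet_pairGraph_eq_empty {v : V} (hv : ¬ ∃ i < s', v = x i ∨ v = y i) :
    (pairGraph s' x y).neighborSet v = ∅ :=
  Set.eq_empty_of_forall_notMem fun _ ⟨⟨i, hi, he⟩, _⟩ =>
    hv ⟨i, hi, (Sym2.eq_iff.1 he).imp And.left And.left⟩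

lemma EnumeratesStarAB.degS_pairGraph [Finite V] (hE : EnumeratesStarAB J s s' x y)
    (hJ : J.IsAcyclic) (hs : 2 * s ≤ s') (hx : Set.InjOn x (Set.Iio s'))
    (hy : Set.InjOn y (Set.Iio s')) (hxy : ∀ i < s', ∀ j < s', x i ≠ y j) {v : V}
    (hv : degS J v ≤ 1) : degS (pairGraph s' x y) v = degS J v := by
  by_cases hend : ∃ i < s', v = x i ∨ v = y i
  · rw [(hE.degS_eq_one_iff hJ hs).2 hend]
    obtain ⟨i, hi, rfl | rfl⟩ := hend
    · rw [degS, neighborSet_pairGraph hx hxy hi, Set.ncard_singleton]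
    · rw [pairGraph_comm, degS,
        neighborSet_pairGraph hy (fun i hi j hj => (hxy j hj i hi).symm) hi, Set.ncard_singleton]
  · have := (hE.degS_eq_one_iff hJ hs).not.2 hend
    rw [degS, neighborSet_pairGraph_eq_empty hend, Set.ncard_empty]
    omega

end Enumeration

lemma SimpleGraph.reachable_of_forall_adj_succ {V : Type*} {H : SimpleGraph V} {p : ℕ → V}
    {a b : ℕ} (hab : a ≤ b) (h : ∀ t, a ≤ t → t < b → H.Adj (p t) (p (t + 1))) :
    H.Reachable (p a) (p b) := by
  induction b, hab using Nat.le_induction with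
  | base => rfl
  | succ b hab ih =>
    exact (ih fun t ht htb => h t ht (by omega)).trans (h b hab (by omega)).reachable

section Cycle

variable {V : Type*} {N : ℕ} {f : ZMod N → V}

lemma cycOn_adj {u v : V} :
    (cycOn f).Adj u v ↔ (∃ i, s(u, v) = s(f i, f (i + 1))) ∧ u ≠ v :=
  fromEdgeSet_adj _

lemma mem_range_of_cycOn_adj {u v : V} (h : (cycOn f).Adj u v) : u ∈ Set.range f := by
  obtain ⟨⟨i, hi⟩, -⟩ := cycOn_adj.1 h
  rcases Sym2.eq_iff.1 hi with ⟨rfl, -⟩ | ⟨rfl, -⟩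
  exacts [⟨i, rfl⟩, ⟨i + 1, rfl⟩]

lemma cycOn_neighborSet_of_notMem_range {v : V} (hv : v ∉ Set.range f) :
    (cycOn f).neighborSet v = ∅ :=
  Set.eq_empty_of_forall_notMem fun _ h => hv (mem_range_of_cycOn_adj h)

lemma cycOn_adj_apply_add_one [Fact (1 < N)] (hf : Function.Injective f) (i : ZMod N) :
    (cycOn f).Adj (f i) (f (i + 1)) :=
  cycOn_adj.2 ⟨⟨i, rfl⟩, fun h => one_ne_zero (add_eq_left.1 (hf h).symm)⟩

lemma degS_cycOn (hN : 3 ≤ N) (hf : Function.Injective f) (i : ZMod N) :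
    degS (cycOn f) (f i) = 2 := by
  have : Fact (1 < N) := ⟨by omega⟩
  have hnbr : (cycOn f).neighborSet (f i) = {f (i - 1), f (i + 1)} := by
    ext u
    simp only [mem_neighborSet, Set.mem_insert_iff, Set.mem_singleton_iff]
    constructor
    · rintro h
      obtain ⟨⟨k, hk⟩, -⟩ := cycOn_adj.1 h
      rcases Sym2.eq_iff.1 hk with ⟨h1, rfl⟩ | ⟨h1, rfl⟩
      · exact Or.inr (by rw [hf h1])
      · exact Or.inl (by rw [hf h1, add_sub_cancel_right])
    · rintro (rfl | rfl)
      · simpa using (cycOn_adj_apply_add_one hf (i - 1)).symm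
      · exact cycOn_adj_apply_add_one hf i
  have hne : f (i - 1) ≠ f (i + 1) := fun h => by
    have h2 : ((2 : ℕ) : ZMod N) = 0 := by push_cast; linear_combination -(hf h)
    have := Nat.le_of_dvd two_pos ((ZMod.natCast_eq_zero_iff _ _).1 h2)
    omega
  rw [degS, hnbr, Set.ncard_pair hne]

lemma eq_of_apply_add_natCast_eq (hf : Function.Injective f) {c : ZMod N} {a b : ℕ}
    (ha : a < N) (hb : b < N) (h : f (c + a) = f (c + b)) : a = b := by
  simpa [ZMod.val_natCast_of_lt ha, ZMod.val_natCast_of_lt hb] using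
    congrArg ZMod.val (add_left_cancel (hf h))

lemma cycOn_adj_add_natCast_succ [Fact (1 < N)] (hf : Function.Injective f) (c : ZMod N)
    (t : ℕ) : (cycOn f).Adj (f (c + t)) (f (c + (t + 1 : ℕ))) := by
  simpa [add_assoc] using cycOn_adj_apply_add_one hf (c + t)

-- `hab` and `hwrap` say that neither arc between the positions `a` and `b` is a single edge
lemma not_cycOn_adj_of_gap (hf : Function.Injective f) {c : ZMod N} {a b : ℕ}
    (hab : a + 1 < b) (hb : b < N) (hwrap : 0 < a ∨ b + 1 < N) :
    ¬ (cycOn f).Adj (f (c + a)) (f (c + b)) := by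
  intro h
  obtain ⟨⟨i, hi⟩, -⟩ := cycOn_adj.1 h
  rcases Sym2.eq_iff.1 hi with ⟨h1, h2⟩ | ⟨h1, h2⟩
  · have hcast : ((b : ℕ) : ZMod N) = ((a + 1 : ℕ) : ZMod N) := by
      push_cast; linear_combination hf h2 - hf h1
    have := congrArg ZMod.val hcast
    rw [ZMod.val_natCast_of_lt hb, ZMod.val_natCast_of_lt (by omega)] at this
    omega
  · have hcast : ((a : ℕ) : ZMod N) = ((b + 1 : ℕ) : ZMod N) := by
      push_cast; linear_combination hf h1 - hf h2
    rw [ZMod.natCast_eq_natCast_iff', Nat.mod_eq_of_lt (by omega : a < N)] at hcast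
    rcases Nat.lt_or_ge (b + 1) N with hN | hN
    · rw [Nat.mod_eq_of_lt hN] at hcast
      omega
    · rw [show b + 1 = N by omega, Nat.mod_self] at hcast
      omega

lemma reachable_of_forall_cycOn_adj [NeZero N] {H : SimpleGraph V}
    (h : ∀ u v, (cycOn f).Adj u v → H.Reachable u v) (i j : ZMod N) :
    H.Reachable (f i) (f j) := by
  have key : ∀ n : ℕ, H.Reachable (f i) (f (i + n)) := by
    intro n
    induction n with
    | zero => simp
    | succ n ih =>
      refine ih.trans ?_
      by_cases heq : f (i + n) = f (i + (n + 1 : ℕ))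
      · rw [heq]
      · exact h _ _ (cycOn_adj.2 ⟨⟨i + n, by push_cast; rw [add_assoc]⟩, heq⟩)
  simpa using key (j - i).val

end Cycle

section VisitsInOrder

variable {V : Type*} {N : ℕ} {f : ZMod N → V} {r : ℕ} {w : ℕ → V}

lemma VisitsInOrder.not_adj (hf : Function.Injective f) (h : VisitsInOrder f r w)
    {a b c d : ℕ} (hab : a < b) (hbc : b < c) (hc : c < r) (hd : d < r) (hout : d < a ∨ c < d) :
    ¬ (cycOn f).Adj (w a) (w c) := by
  obtain ⟨i₀, o, ho, hw⟩ := h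
  have hmono : ∀ {j k}, j < k → k < r → o j < o k := fun hjk hk => ho (hjk.trans hk) hk hjk
  rw [← (hw a (by omega)).2, ← (hw c hc).2]
  refine not_cycOn_adj_of_gap hf ?_ (hw c hc).1 ?_
  · have := hmono hab (hbc.trans hc)
    have := hmono hbc hc
    omega
  · rcases hout with h | h
    · exact Or.inl (by have := hmono h (by omega); omega)
    · exact Or.inr (by have := hmono h hd; have := (hw d hd).1; omega)

-- The arc of the cycle from `w (2i+1)` to `w (2i+2)` contains no edge `w (2j) w (2j+1)`.
lemma VisitsInOrder.reachable_sdiff [Fact (1 < N)] (hf : Function.Injective f)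
    (h : VisitsInOrder f r w) {F : SimpleGraph V}
    (hF : ∀ u v, F.Adj u v → ∃ j, 2 * j + 1 < r ∧ s(u, v) = s(w (2 * j), w (2 * j + 1)))
    {i : ℕ} (hi : 2 * i + 2 < r) : (cycOn f \ F).Reachable (w (2 * i + 1)) (w (2 * i + 2)) := by
  obtain ⟨c, o, ho, hw⟩ := h
  have hle : ∀ {j k}, j < r → k < r → (o j ≤ o k ↔ j ≤ k) := ho.le_iff_le
  rw [← (hw _ (by omega)).2, ← (hw _ hi).2]
  refine reachable_of_forall_adj_succ (p := fun t : ℕ => f (c + t))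
    (hle (by omega) hi |>.2 (by omega)) fun t ht1 ht2 => ⟨cycOn_adj_add_natCast_succ hf c t, ?_⟩
  rintro hFt
  obtain ⟨j, hj, he⟩ := hF _ _ hFt
  have htN : t + 1 < N := by have := (hw _ hi).1; omega
  rw [← (hw _ (by omega)).2, ← (hw _ hj).2] at he
  have hx := (hw (2 * j) (by omega)).1
  have hy := (hw (2 * j + 1) hj).1
  rcases Sym2.eq_iff.1 he with ⟨e1, e2⟩ | ⟨e1, e2⟩
  · obtain rfl := eq_of_apply_add_natCast_eq hf (by omega) hx e1
    have h2 := eq_of_apply_add_natCast_eq hf (by omega) hy e2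
    have := (hle (by omega) (by omega)).1 ht1
    have := (hle hj hi).1 (h2 ▸ ht2 : o (2 * j + 1) ≤ o (2 * i + 2))
    omega
  · obtain rfl := eq_of_apply_add_natCast_eq hf (by omega) hy e1
    have h2 := eq_of_apply_add_natCast_eq hf (by omega) hx e2
    have : o (2 * j) < o (2 * j + 1) := ho (show 2 * j < r by omega) hj (by omega)
    omega

end VisitsInOrder

section Main

variable {V : Type*} {J : SimpleGraph V} {N : ℕ} {f : ZMod N → V} {s s' : ℕ} {x y : ℕ → V}

lemma EnumeratesStarAB.disjoint_cycOn [Finite V] (hE : EnumeratesStarAB J s s' x y)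
    (hs : 2 * s ≤ s') (hf : Function.Injective f) (hvis : VisitsInOrder f (2 * s') (interleave x y))
    (hJin : ∀ v ∈ Set.range f, degS J v ≤ 1) (hJxy : ∀ i < s', ¬ J.Adj (x i) (y i)) :
    Disjoint J (cycOn f) := by
  rw [← disjoint_edgeSet, Set.disjoint_left]
  intro e hJe hDe
  induction e using Sym2.ind with | _ u v => ?_
  have hJuv : J.Adj u v := hJe
  have hDuv : (cycOn f).Adj u v := hDe
  have hst : s(u, v) ∈ (starAB J).edgeSet := starAB_adj.2
    ⟨hJuv.ne, le_antisymm (hJin u (mem_range_of_cycOn_adj hDuv)) (degS_pos_of_adj hJuv),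
      le_antisymm (hJin v (mem_range_of_cycOn_adj hDuv.symm)) (degS_pos_of_adj hJuv.symm),
      hJuv.reachable⟩
  rw [hE] at hst
  rcases hst with (⟨k, hk, he⟩ | ⟨k, hk, he⟩) | ⟨i, -, hi, he⟩ <;> rw [he] at hDe hJe
  · exact hvis.not_adj hf (a := 2 * (2 * k)) (b := 2 * (2 * k) + 1) (c := 2 * (2 * k + 1))
      (d := 2 * (2 * k + 1) + 1) (by omega) (by omega) (by omega) (by omega) (by omega)
      (by simpa using hDe)
  · exact hvis.not_adj hf (a := 2 * (2 * k) + 1) (b := 2 * (2 * k + 1))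
      (c := 2 * (2 * k + 1) + 1) (d := 2 * (2 * k)) (by omega) (by omega) (by omega) (by omega)
      (by omega) (by simpa using hDe)
  · exact hJxy i hi hJe

lemma EnumeratesStarAB.degS_sdiff_pairGraph_sup [Finite V] (hE : EnumeratesStarAB J s s' x y)
    (hJ : J.IsAcyclic) (hs : 2 * s ≤ s') (hx : Set.InjOn x (Set.Iio s'))
    (hy : Set.InjOn y (Set.Iio s')) (hxy : ∀ i < s', ∀ j < s', x i ≠ y j) (hN : 3 ≤ N)
    (hf : Function.Injective f) (hJout : ∀ v ∉ Set.range f, degS J v = 2)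
    (hJin : ∀ v ∈ Set.range f, degS J v ≤ 1) (hFD : pairGraph s' x y ≤ cycOn f)
    (hJD : Disjoint J (cycOn f)) (v : V) :
    degS ((cycOn f \ pairGraph s' x y) ⊔ J) v = 2 := by
  have key := degS_sdiff_sup_add_degS hFD hJD v
  by_cases hv : v ∈ Set.range f
  · obtain ⟨i, rfl⟩ := hv
    rw [hE.degS_pairGraph hJ hs hx hy hxy (hJin _ ⟨i, rfl⟩), degS_cycOn hN hf] at key
    omega
  · have hD : degS (cycOn f) v = 0 := by
      rw [degS, cycOn_neighborSet_of_notMem_range hv, Set.ncard_empty]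
    have hF : degS (pairGraph s' x y) v = 0 := by
      rw [degS, Set.ncard_eq_zero]
      exact Set.subset_empty_iff.1 ((cycOn_neighborSet_of_notMem_range hv) ▸ fun _ h => hFD h)
    rw [hD, hF, hJout v hv] at key
    omega

lemma EnumeratesStarAB.reachable_sdiff_pairGraph_sup (hE : EnumeratesStarAB J s s' x y)
    (hs : 2 * s ≤ s') [Fact (1 < N)] (hf : Function.Injective f)
    (hvis : VisitsInOrder f (2 * s') (interleave x y))
    {i : ℕ} (hi : i < s') : ((cycOn f \ pairGraph s' x y) ⊔ J).Reachable (x i) (y i) := by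
  have harc : ∀ j, j + 1 < s' → (cycOn f \ pairGraph s' x y).Reachable (y j) (x (j + 1)) := by
    intro j hj
    simpa [show 2 * j + 2 = 2 * (j + 1) by ring] using
      hvis.reachable_sdiff hf (F := pairGraph s' x y) (i := j)
        (fun u v huv =>
          have ⟨⟨k, hk, he⟩, _⟩ := pairGraph_adj.1 huv
          ⟨k, by omega, by simpa using he⟩)
        (by omega)
  have hD {u v : V} (h : (cycOn f \ pairGraph s' x y).Reachable u v) :=
    h.mono (le_sup_left : _ ≤ (cycOn f \ pairGraph s' x y) ⊔ J)
  have hJ {u v : V} (h : J.Reachable u v) :=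
    h.mono (le_sup_right : J ≤ (cycOn f \ pairGraph s' x y) ⊔ J)
  -- for `i < 2s`, follow `J` from `x i` (or `y i`) to its partner in `J*_{AB}`, then an arc
  rcases lt_or_ge i (2 * s) with h | h
  · obtain ⟨k, rfl | rfl⟩ := Nat.even_or_odd' i
    · exact (hJ (hE.starAB_adj_x (by omega)).2.2.2).trans (hD (harc _ (by omega))).symm
    · exact (hD (harc _ (by omega))).symm.trans (hJ (hE.starAB_adj_y (by omega)).2.2.2)
  · exact hJ (hE.starAB_adj_xy h hi).2.2.2

lemma EnumeratesStarAB.connected_sdiff_pairGraph_sup [Finite V] (hE : EnumeratesStarAB J s s' x y)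
    (hs : 2 * s ≤ s') (hJ : J.IsAcyclic) (hN : 3 ≤ N) (hf : Function.Injective f)
    (hvis : VisitsInOrder f (2 * s') (interleave x y))
    (hJout : ∀ v ∉ Set.range f, degS J v = 2) :
    ((cycOn f \ pairGraph s' x y) ⊔ J).Connected := by
  have : Fact (1 < N) := ⟨by omega⟩
  have : NeZero N := ⟨by omega⟩
  set H := (cycOn f \ pairGraph s' x y) ⊔ J
  have hcyc : ∀ u v, (cycOn f).Adj u v → H.Reachable u v := by
    intro u v huv
    by_cases hF : (pairGraph s' x y).Adj u v
    · obtain ⟨⟨i, hi, he⟩, -⟩ := hF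
      rcases Sym2.eq_iff.1 he with ⟨rfl, rfl⟩ | ⟨rfl, rfl⟩
      exacts [hE.reachable_sdiff_pairGraph_sup hs hf hvis hi,
        (hE.reachable_sdiff_pairGraph_sup hs hf hvis hi).symm]
    · exact (show H.Adj u v from Or.inl ⟨huv, hF⟩).reachable
  -- a vertex off the cycle reaches a leaf of `J`, and the leaves of `J` lie on the cycle
  have hreach : ∀ v, ∃ i, H.Reachable v (f i) := by
    intro v
    by_cases hv : v ∈ Set.range f
    · obtain ⟨i, rfl⟩ := hv
      exact ⟨i, .rfl⟩
    · obtain ⟨w, hw⟩ := Set.nonempty_of_ncard_ne_zero (s := J.neighborSet v)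
        (by rw [← degS, hJout v hv]; omega)
      obtain ⟨z, -, hz, hvz⟩ := hJ.exists_degS_eq_one_reachable hw
      obtain ⟨i, rfl⟩ : z ∈ Set.range f := by
        by_contra h
        have := hJout z h
        omega
      exact ⟨i, hvz.mono le_sup_right⟩
  have : Nonempty V := ⟨f 0⟩
  refine ⟨fun u v => ?_⟩
  obtain ⟨i, hi⟩ := hreach u
  obtain ⟨j, hj⟩ := hreach v
  exact hi.trans ((reachable_of_forall_cycOn_adj hcyc i j).trans hj.symm)

end Main

theorem isHamCycleOn_sdiff_pairGraph_sup {V : Type*} [Finite V] {J : SimpleGraph V}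
    (hJ : J.IsAcyclic) {N : ℕ} {f : ZMod N → V} (hN : 3 ≤ N) (hf : Function.Injective f)
    (hJout : ∀ v ∉ Set.range f, degS J v = 2) (hJin : ∀ v ∈ Set.range f, degS J v ≤ 1)
    {s s' : ℕ} (hs : 2 * s ≤ s') {x y : ℕ → V} (hE : EnumeratesStarAB J s s' x y)
    (hx : Set.InjOn x (Set.Iio s')) (hy : Set.InjOn y (Set.Iio s'))
    (hxy : ∀ i < s', ∀ j < s', x i ≠ y j) (hJxy : ∀ i < s', ¬ J.Adj (x i) (y i))
    (hFD : pairGraph s' x y ≤ cycOn f) (hvis : VisitsInOrder f (2 * s') (interleave x y)) :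
    IsHamCycleOn ((cycOn f \ pairGraph s' x y) ⊔ J) Set.univ :=
  isHamCycleOn_univ_of_degS_eq_two (hE.connected_sdiff_pairGraph_sup hs hJ hN hf hvis hJout)
    (hE.degS_sdiff_pairGraph_sup hJ hs hx hy hxy hN hf hJout hJin hFD
      (hE.disjoint_cycOn hs hf hvis hJin hJxy))

lemma mem_sdiff_union_sdiff_iff {V ι : Type*} {AA BB : ι → Set V}
    (hAB : ∀ i j, Disjoint (AA i) (BB j)) (hcover : (⋃ i, AA i) ∪ (⋃ i, BB i) = Set.univ)
    (i₀ : ι) (v : V) :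
    v ∈ (⋃ i, AA i) \ AA i₀ ∪ (⋃ i, BB i) \ BB i₀ ↔ v ∉ AA i₀ ∪ BB i₀ := by
  have hv : v ∈ (⋃ i, AA i) ∪ ⋃ i, BB i := hcover ▸ Set.mem_univ v
  simp only [Set.mem_union, Set.mem_sdiff, Set.mem_iUnion] at hv ⊢
  have hd : ∀ i j, v ∈ AA i → v ∉ BB j := fun i j => @Set.disjoint_left.1 (hAB i j) v
  grind

theorem stmt14_general (V : Type*) [Fintype V] (K : ℕ)
    (AA BB : Fin (K + 1) → Set V) (A B : Set V) (J : SimpleGraph V)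
    -- the (K,m,ε)-partition
    (hABdisj : ∀ i j, Disjoint (AA i) (BB j))
    (hcover : (⋃ i, AA i) ∪ (⋃ i, BB i) = Set.univ)
    (hA : A = (⋃ i, AA i) \ AA 0) (hB : B = (⋃ i, BB i) \ BB 0)
    -- J is a balanced exceptional system with respect to the partition
    (hps : PathSystem J)
    (i₁ i₂ i₃ i₄ : Fin (K + 1))
    (hBES1a : ∀ v ∈ AA 0 ∪ BB 0, degS J v = 2)
    (hBES1b : ∀ v, v ∉ AA 0 ∪ BB 0 → degS J v ≤ 1)
    (hBES2 : ∀ u v, J.Adj u v → u ∈ A ∪ B → v ∈ A ∪ B →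
      (u ∈ AA i₁ ∧ v ∈ AA i₂) ∨ (u ∈ AA i₂ ∧ v ∈ AA i₁) ∨
      (u ∈ BB i₃ ∧ v ∈ BB i₄) ∨ (u ∈ BB i₄ ∧ v ∈ BB i₃))
    -- the fictive edges `J* = {x_i y_i : i < s'}`, obtained by enumerating the edges of
    -- `J*_{AB}` inside `A` as `x₀x₁, …, x_{2s-2}x_{2s-1}`, those inside `B` as
    -- `y₀y₁, …, y_{2s-2}y_{2s-1}` and the `AB`-edges as `x_iy_i` for `2s ≤ i < s'`
    (s s' : ℕ) (hs : 2 * s ≤ s') (x y : ℕ → V)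
    (hxinj : Set.InjOn x (Set.Iio s')) (hyinj : Set.InjOn y (Set.Iio s'))
    (hxA : ∀ i < s', x i ∈ A) (hyB : ∀ i < s', y i ∈ B)
    (hedges : (starAB J).edgeSet =
      {e | ∃ i < s, e = s(x (2 * i), x (2 * i + 1))} ∪
      {e | ∃ i < s, e = s(y (2 * i), y (2 * i + 1))} ∪
      {e | ∃ i, 2 * s ≤ i ∧ i < s' ∧ e = s(x i, y i)})
    (Jstar : SimpleGraph V)
    (hJstar : Jstar = SimpleGraph.fromEdgeSet {e | ∃ i < s', e = s(x i, y i)})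
    -- `D` is a Hamilton cycle of `G[A ∪ B] + J*`, consistent with `J*`
    (N : ℕ) (f : ZMod N → V) (hN : 3 ≤ N)
    (hfinj : Function.Injective f) (hfrange : Set.range f = A ∪ B)
    (hcons : Jstar ≤ cycOn f ∧
      VisitsInOrder f (2 * s')
        (fun j => if j % 2 = 0 then x (j / 2) else y (j / 2))) :
    IsHamCycleOn ((cycOn f \ Jstar) ⊔ J) Set.univ := by
  subst hJstar hA hB
  have hV₀ := mem_sdiff_union_sdiff_iff hABdisj hcover 0
  have hAB : ∀ {u v}, u ∈ ⋃ i, AA i → v ∈ ⋃ i, BB i → u ≠ v := fun hu hv huv =>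
    Set.disjoint_left.1
      (Set.disjoint_iUnion_left.2 fun i => Set.disjoint_iUnion_right.2 (hABdisj i)) hu (huv ▸ hv)
  have hJxy : ∀ i < s', ¬ J.Adj (x i) (y i) := by
    intro i hi hJ
    have hx := (hxA i hi).1
    have hy := (hyB i hi).1
    rcases hBES2 _ _ hJ (.inl (hxA i hi)) (.inr (hyB i hi)) with
      ⟨-, h⟩ | ⟨-, h⟩ | ⟨h, -⟩ | ⟨h, -⟩
    exacts [hAB (Set.mem_iUnion_of_mem _ h) hy rfl, hAB (Set.mem_iUnion_of_mem _ h) hy rfl,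
      hAB hx (Set.mem_iUnion_of_mem _ h) rfl, hAB hx (Set.mem_iUnion_of_mem _ h) rfl]
  refine isHamCycleOn_sdiff_pairGraph_sup hps.1 hN hfinj (fun v hv => hBES1a v ?_)
    (fun v hv => hBES1b v ?_) hs hedges hxinj hyinj
    (fun i hi j hj => hAB (hxA i hi).1 (hyB j hj).1) hJxy hcons.1 hcons.2
  · rwa [hfrange, hV₀, not_not] at hv
  · rwa [hfrange, hV₀] at hv

/-- Proposition 7.1: if `J ⊆ G` is a balanced exceptional system with respect to a
`(K,m,ε)`-partition and `D` is a Hamilton cycle of `G[A ∪ B] + J*` consistent with `J*`,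
then `D - J* + J` is a Hamilton cycle of `G`. -/
theorem stmt14 (V : Type*) [Fintype V] (K m : ℕ) (ε : ℝ) (hK : 1 ≤ K)
    (AA BB : Fin (K + 1) → Set V) (A B : Set V) (G J : SimpleGraph V)
    -- the (K,m,ε)-partition
    (hAAdisj : ∀ i j, i ≠ j → Disjoint (AA i) (AA j))
    (hBBdisj : ∀ i j, i ≠ j → Disjoint (BB i) (BB j))
    (hABdisj : ∀ i j, Disjoint (AA i) (BB j))
    (hcover : (⋃ i, AA i) ∪ (⋃ i, BB i) = Set.univ)
    (hsize : ∀ i, i ≠ 0 → (AA i).ncard = m ∧ (BB i).ncard = m)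
    (hexc : ((AA 0 ∪ BB 0).ncard : ℝ) ≤ ε * Fintype.card V)
    (hA : A = (⋃ i, AA i) \ AA 0) (hB : B = (⋃ i, BB i) \ BB 0)
    -- J is a balanced exceptional system with respect to the partition
    (hps : PathSystem J)
    (i₁ i₂ i₃ i₄ : Fin (K + 1))
    (hi : i₁ ≠ 0 ∧ i₂ ≠ 0 ∧ i₃ ≠ 0 ∧ i₄ ≠ 0)
    (hloc : ∀ v, 0 < degS J v → v ∈ AA 0 ∪ BB 0 ∪ AA i₁ ∪ AA i₂ ∪ BB i₃ ∪ BB i₄)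
    (hBES1a : ∀ v ∈ AA 0 ∪ BB 0, degS J v = 2)
    (hBES1b : ∀ v, v ∉ AA 0 ∪ BB 0 → degS J v ≤ 1)
    (hBES2 : ∀ u v, J.Adj u v → u ∈ A ∪ B → v ∈ A ∪ B →
      (u ∈ AA i₁ ∧ v ∈ AA i₂) ∨ (u ∈ AA i₂ ∧ v ∈ AA i₁) ∨
      (u ∈ BB i₃ ∧ v ∈ BB i₄) ∨ (u ∈ BB i₄ ∧ v ∈ BB i₃))
    (hBES3 : {v | v ∈ A ∧ 0 < degS J v}.ncard = {v | v ∈ B ∧ 0 < degS J v}.ncard)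
    (hBES4 : (J.edgeSet.ncard : ℝ) ≤ ε * Fintype.card V)
    (hJG : J ≤ G)
    -- the fictive edges `J* = {x_i y_i : i < s'}`, obtained by enumerating the edges of
    -- `J*_{AB}` inside `A` as `x₀x₁, …, x_{2s-2}x_{2s-1}`, those inside `B` as
    -- `y₀y₁, …, y_{2s-2}y_{2s-1}` and the `AB`-edges as `x_iy_i` for `2s ≤ i < s'`
    (s s' : ℕ) (hs : 2 * s ≤ s') (x y : ℕ → V)
    (hxinj : Set.InjOn x (Set.Iio s')) (hyinj : Set.InjOn y (Set.Iio s'))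
    (hxA : ∀ i < s', x i ∈ A) (hyB : ∀ i < s', y i ∈ B)
    (hedges : (starAB J).edgeSet =
      {e | ∃ i < s, e = s(x (2 * i), x (2 * i + 1))} ∪
      {e | ∃ i < s, e = s(y (2 * i), y (2 * i + 1))} ∪
      {e | ∃ i, 2 * s ≤ i ∧ i < s' ∧ e = s(x i, y i)})
    (Jstar : SimpleGraph V)
    (hJstar : Jstar = SimpleGraph.fromEdgeSet {e | ∃ i < s', e = s(x i, y i)})
    -- `D` is a Hamilton cycle of `G[A ∪ B] + J*`, consistent with `J*`
    (N : ℕ) (f : ZMod N → V) (hN : 3 ≤ N)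
    (hfinj : Function.Injective f) (hfrange : Set.range f = A ∪ B)
    (hDsub : cycOn f ≤ G ⊔ Jstar)
    (hcons : Jstar ≤ cycOn f ∧
      VisitsInOrder f (2 * s')
        (fun j => if j % 2 = 0 then x (j / 2) else y (j / 2))) :
    IsHamCycleOn ((cycOn f \ Jstar) ⊔ J) Set.univ :=
  stmt14_general V K AA BB A B J hABdisj hcover hA hB hps i₁ i₂ i₃ i₄ hBES1a hBES1b hBES2 s s' hs x
    y hxinj hyinj hxA hyB hedges Jstar hJstar N f hN hfinj hfrange hcons
end
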